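/- Let p(·) : ℝⁿ → (0,∞) satisfy the globally log-Hölder continuity conditions: there exist constants C_log, C_∞ > 0 and p_∞ ∈ ℝ such that |p(x) − p(y)| ≤ C_log / log(e + 1/|x−y|) for all x, y, and |p(x) − p_∞| ≤ C_∞ / log(e + |x|) for all x. Assume 0 < p₋ ≤ p₊ < ∞. Then there is a constant C ≥ 1 such that for all balls B₁ ⊂ B₂ of ℝⁿ, C^{-1} (|B₁|/|B₂|)^{1/p₋} ≤ ‖χ_{B₁}‖_{L^{p(·)}} / ‖χ_{B₂}‖_{L^{p(·)}} ≤ C (|B₁|/|B₂|)^{1/p₊}. -/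

import Mathlib

/-!
On a ball `B` with `|B| ≤ 1`, local log-Hölder continuity bounds `|B| ^ (p x - p y)` uniformly
for `x, y ∈ B`, so the modular of `χ_B / λ` behaves as for the constant exponent `p z`
(`z ∈ B`) and `‖χ_B‖ ≈ |B| ^ (1 / p z)`. For `|B| ≥ 1` the decay condition does the same with
`p_∞` outside the ball of radius `|B| ^ γ` about the origin: for small `γ` that ball contributes
a bounded amount to the modular from above, and once `|B|` is large it misses at least half of
`B`, which gives the bound from below; hence `‖χ_B‖ ≈ |B| ^ (1 / p_∞)`. As `p` is continuous,
`p₋ ≤ p ≤ p₊` everywhere and `p_∞` may be clamped into `[p₋, p₊]`. Comparing the two estimates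
for `B₁ ⊆ B₂` in the three cases `|B₁| ≤ |B₂| ≤ 1`, `|B₁| ≤ 1 < |B₂|`, `1 < |B₁| ≤ |B₂|`
gives the theorem.
-/

open MeasureTheory ENNReal Set

/-- The Luxemburg quasi-norm on the variable Lebesgue space `L^{p(·)}(ℝⁿ)`. -/
noncomputable def luxNorm {n : ℕ} (p : EuclideanSpace ℝ (Fin n) → ℝ)
    (f : EuclideanSpace ℝ (Fin n) → ℝ) : ℝ :=
  sInf {l : ℝ | 0 < l ∧ ∫⁻ x, ENNReal.ofReal ((|f x| / l) ^ p x) ≤ 1}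

open Metric Filter Topology

theorem Continuous.le_of_ae_le {X α : Type*} [TopologicalSpace X] [MeasurableSpace X]
    [TopologicalSpace α] [Preorder α] [OrderClosedTopology α] {μ : Measure X}
    [μ.IsOpenPosMeasure] {f g : X → α} (hf : Continuous f) (hg : Continuous g)
    (h : f ≤ᵐ[μ] g) : f ≤ g := fun x => by
  have := (μ.dense_of_ae h).closure_eq
  rw [(isClosed_le hf hg).closure_eq] at this
  exact (this ▸ mem_univ x : x ∈ {x | f x ≤ g x})

section LogHolder

variable {X : Type*}

def LocallyLogHolder [Dist X] (p : X → ℝ) (C : ℝ) : Prop :=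
  ∀ x y, x ≠ y → |p x - p y| ≤ C / Real.log (Real.exp 1 + 1 / dist x y)

def LogHolderAtInfinity [Norm X] (p : X → ℝ) (C pinf : ℝ) : Prop :=
  ∀ x, |p x - pinf| ≤ C / Real.log (Real.exp 1 + ‖x‖)

theorem one_le_log_exp_one_add {t : ℝ} (ht : 0 ≤ t) : 1 ≤ Real.log (Real.exp 1 + t) := by
  rw [← Real.log_exp 1]
  exact Real.log_le_log (Real.exp_pos 1) (by rw [Real.log_exp]; linarith)

variable {p : X → ℝ} {C : ℝ}

theorem LocallyLogHolder.abs_sub_mul_log_le [MetricSpace X] (hp : LocallyLogHolder p C)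
    (hC : 0 ≤ C) {x y : X} {d : ℝ} (hxy : dist x y ≤ d) :
    |p x - p y| * Real.log (Real.exp 1 + 1 / d) ≤ C := by
  rcases eq_or_ne x y with rfl | hne
  · simpa using hC
  have hxy₀ : 0 < dist x y := dist_pos.2 hne
  have hd : 0 < d := hxy₀.trans_le hxy
  have hL := one_le_log_exp_one_add (one_div_pos.2 hxy₀).le
  calc |p x - p y| * Real.log (Real.exp 1 + 1 / d)
      ≤ C / Real.log (Real.exp 1 + 1 / dist x y) * Real.log (Real.exp 1 + 1 / dist x y) := by
        gcongr
        · exact (one_le_log_exp_one_add (by positivity)).trans' zero_le_one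
        · exact hp x y hne
    _ = C := div_mul_cancel₀ C (by positivity)

theorem LocallyLogHolder.continuous [MetricSpace X] (hp : LocallyLogHolder p C) (hC : 0 ≤ C) :
    Continuous p := by
  refine Metric.continuous_iff.2 fun y ε hε =>
    ⟨(Real.exp (C / ε))⁻¹, by positivity, fun x hxy => ?_⟩
  have hL : C / ε < Real.log (Real.exp 1 + 1 / (Real.exp (C / ε))⁻¹) := by
    rw [one_div, inv_inv]
    calc C / ε = Real.log (Real.exp (C / ε)) := (Real.log_exp _).symm
      _ < _ := Real.log_lt_log (Real.exp_pos _) (lt_add_of_pos_left _ (Real.exp_pos 1))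
  rw [Real.dist_eq]
  refine lt_of_mul_lt_mul_right ?_ (hL.le.trans' (by positivity))
  calc _ ≤ C := hp.abs_sub_mul_log_le hC hxy.le
    _ < _ := (div_lt_iff₀' hε).1 hL

theorem LogHolderAtInfinity.abs_sub_mul_log_le [SeminormedAddCommGroup X]
    {pinf : ℝ} (hp : LogHolderAtInfinity p C pinf) (hC : 0 ≤ C) {x : X} {R : ℝ} (hR : 0 ≤ R)
    (hx : R ≤ ‖x‖) : |p x - pinf| * Real.log (Real.exp 1 + R) ≤ C := by
  have hL := one_le_log_exp_one_add (norm_nonneg x)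
  calc |p x - pinf| * Real.log (Real.exp 1 + R)
      ≤ C / Real.log (Real.exp 1 + ‖x‖) * Real.log (Real.exp 1 + ‖x‖) := by
        gcongr
        · exact (one_le_log_exp_one_add hR).trans' zero_le_one
        · exact hp x
    _ = C := div_mul_cancel₀ C (by positivity)

theorem LogHolderAtInfinity.projIcc [Norm X] {pinf a b : ℝ} (hp : LogHolderAtInfinity p C pinf)
    (hab : a ≤ b) (hpab : ∀ x, p x ∈ Icc a b) : LogHolderAtInfinity p C (projIcc a b hab pinf) :=
  fun x => by
    have := abs_projIcc_sub_projIcc hab (c := p x) (d := pinf)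
    rw [projIcc_of_mem hab (hpab x)] at this
    exact this.trans (hp x)

end LogHolder

theorem inv_mul_rpow_one_div_rpow {A v s : ℝ} (hA : 0 < A) (hv : 0 < v) (hs : s ≠ 0) (t : ℝ) :
    (A * v ^ (1 / s))⁻¹ ^ t = A ^ (-t) * Real.exp ((s - t) / s * Real.log v) / v := by
  have hexp : (s - t) / s * Real.log v = Real.log v * (-t * (1 / s)) + Real.log v := by
    field_simp; ring
  rw [Real.inv_rpow (by positivity), ← Real.rpow_neg (by positivity),
    Real.mul_rpow hA.le (by positivity), ← Real.rpow_mul hv.le, Real.rpow_def_of_pos hv, hexp,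
    Real.exp_add, Real.exp_log hv]
  field_simp

theorem inv_mul_rpow_le {A v s t pm K : ℝ} (hA : 1 ≤ A) (hv : 0 < v) (hs : 0 < s) (ht : pm ≤ t)
    (hK : (s - t) / s * Real.log v ≤ K) :
    (A * v ^ (1 / s))⁻¹ ^ t ≤ A ^ (-pm) * Real.exp K / v := by
  rw [inv_mul_rpow_one_div_rpow (by positivity) hv hs.ne']
  gcongr

theorem le_inv_mul_rpow {a v s t pm K : ℝ} (ha : 0 < a) (ha₁ : a ≤ 1) (hv : 0 < v) (hs : 0 < s)
    (ht : pm ≤ t) (hK : -K ≤ (s - t) / s * Real.log v) :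
    a ^ (-pm) * Real.exp (-K) / v ≤ (a * v ^ (1 / s))⁻¹ ^ t := by
  rw [inv_mul_rpow_one_div_rpow ha hv hs.ne']
  have hpow : a ^ (-pm) ≤ a ^ (-t) := Real.rpow_le_rpow_of_exponent_ge ha ha₁ (neg_le_neg ht)
  gcongr

theorem setLIntegral_ofReal_le {α : Type*} [MeasurableSpace α] {μ : Measure α} {S : Set α}
    (hS : MeasurableSet S) {f : α → ℝ} {c : ℝ} (hf : ∀ x ∈ S, f x ≤ c) :
    ∫⁻ x in S, ENNReal.ofReal (f x) ∂μ ≤ ENNReal.ofReal c * μ S :=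
  (setLIntegral_mono' hS fun x hx => ENNReal.ofReal_le_ofReal (hf x hx)).trans_eq
    (setLIntegral_const _ _)

theorem ofReal_mul_le_setLIntegral {α : Type*} [MeasurableSpace α] {μ : Measure α} {S : Set α}
    (hS : MeasurableSet S) {f : α → ℝ} {c : ℝ} (hf : ∀ x ∈ S, c ≤ f x) :
    ENNReal.ofReal c * μ S ≤ ∫⁻ x in S, ENNReal.ofReal (f x) ∂μ :=
  (setLIntegral_const _ _).symm.trans_le
    (setLIntegral_mono' hS fun x hx => ENNReal.ofReal_le_ofReal (hf x hx))

noncomputable def unitBallVolume (n : ℕ) : ℝ :=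
  (volume (ball (0 : EuclideanSpace ℝ (Fin n)) 1)).toReal

theorem unitBallVolume_pos (n : ℕ) : 0 < unitBallVolume n :=
  ENNReal.toReal_pos (measure_ball_pos volume _ one_pos).ne' measure_ball_lt_top.ne

theorem volume_ball_eq_ofReal {n : ℕ} (x : EuclideanSpace ℝ (Fin n)) {r : ℝ} (hr : 0 < r) :
    volume (ball x r) = ENNReal.ofReal (r ^ n * unitBallVolume n) := by
  rw [Measure.addHaar_ball_of_pos _ _ hr, finrank_euclideanSpace_fin, unitBallVolume,
    ENNReal.ofReal_mul (by positivity), ofReal_toReal measure_ball_lt_top.ne]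

theorem volume_ball_toReal {n : ℕ} (x : EuclideanSpace ℝ (Fin n)) {r : ℝ} (hr : 0 < r) :
    (volume (ball x r)).toReal = r ^ n * unitBallVolume n := by
  rw [volume_ball_eq_ofReal x hr, toReal_ofReal (by have := unitBallVolume_pos n; positivity)]

theorem volume_ball_toReal_pos {n : ℕ} (x : EuclideanSpace ℝ (Fin n)) {r : ℝ} (hr : 0 < r) :
    0 < (volume (ball x r)).toReal :=
  ENNReal.toReal_pos (measure_ball_pos volume x hr).ne' measure_ball_lt_top.ne

section Luxemburg

variable {n : ℕ} {p : EuclideanSpace ℝ (Fin n) → ℝ} {B : Set (EuclideanSpace ℝ (Fin n))}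

theorem lintegral_abs_indicator_one_div_rpow (hpos : ∀ x, 0 < p x) (hB : MeasurableSet B)
    (l : ℝ) : ∫⁻ x, ENNReal.ofReal ((|B.indicator (fun _ => (1 : ℝ)) x| / l) ^ p x) =
      ∫⁻ x in B, ENNReal.ofReal (l⁻¹ ^ p x) := by
  rw [← lintegral_indicator hB]
  congr 1 with x
  by_cases hx : x ∈ B <;> simp [hx, Real.zero_rpow (hpos x).ne']

theorem luxNorm_indicator_mem_Icc (hpos : ∀ x, 0 < p x) (hB : MeasurableSet B) {a A : ℝ}
    (ha : 0 < a) (hA : 0 < A) (hmoda : 1 < ∫⁻ x in B, ENNReal.ofReal (a⁻¹ ^ p x))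
    (hmodA : ∫⁻ x in B, ENNReal.ofReal (A⁻¹ ^ p x) ≤ 1) :
    luxNorm p (B.indicator fun _ => 1) ∈ Icc a A := by
  simp only [luxNorm, lintegral_abs_indicator_one_div_rpow hpos hB]
  refine ⟨le_csInf ⟨A, hA, hmodA⟩ fun l ⟨hl, hmodl⟩ => ?_,
    csInf_le ⟨0, fun l hl => hl.1.le⟩ ⟨hA, hmodA⟩⟩
  by_contra! hla
  refine (hmoda.trans_le (le_trans ?_ hmodl)).false
  exact lintegral_mono fun x => ENNReal.ofReal_le_ofReal <|
    Real.rpow_le_rpow (by positivity) (inv_anti₀ hl hla.le) (hpos x).le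

theorem luxNorm_indicator_mem_Icc_of_abs_le {pm s v K : ℝ} (hpm : 0 < pm) (hp : ∀ x, pm ≤ p x)
    (hB : MeasurableSet B) (hvB : volume B = ENNReal.ofReal v) (hv : 0 < v) (hs : 0 < s)
    (hK₀ : 0 ≤ K) (hK : ∀ x ∈ B, |(s - p x) / s * Real.log v| ≤ K) :
    luxNorm p (B.indicator fun _ => 1) ∈
      Icc ((Real.exp ((K + 1) / pm))⁻¹ * v ^ (1 / s)) (Real.exp ((K + 1) / pm) * v ^ (1 / s)) := by
  set M := Real.exp ((K + 1) / pm)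
  have hM₀ : 0 < M := Real.exp_pos _
  have hM : M ^ (-pm) = Real.exp (-(K + 1)) := by
    rw [← Real.exp_mul]; congr 1; field_simp
  have hM' : M⁻¹ ^ (-pm) = Real.exp (K + 1) := by
    rw [Real.inv_rpow hM₀.le, hM, Real.exp_neg, inv_inv]
  apply luxNorm_indicator_mem_Icc (fun x => hpm.trans_le (hp x)) hB (by positivity) (by positivity)
  · calc (1 : ℝ≥0∞) < ENNReal.ofReal (Real.exp 1) := by
          rw [ENNReal.one_lt_ofReal]; exact Real.one_lt_exp_iff.2 one_pos
      _ = ENNReal.ofReal (M⁻¹ ^ (-pm) * Real.exp (-K) / v) * volume B := by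
          rw [hvB, ← ENNReal.ofReal_mul (by positivity), hM', ← Real.exp_add]
          congr 1; field_simp; ring_nf
      _ ≤ _ := ofReal_mul_le_setLIntegral hB fun x hx =>
          le_inv_mul_rpow (inv_pos.2 hM₀) (inv_le_one_of_one_le₀ (Real.one_le_exp (by positivity)))
            hv hs (hp x) (neg_le_of_abs_le (hK x hx))
  · calc _ ≤ ENNReal.ofReal (M ^ (-pm) * Real.exp K / v) * volume B :=
          setLIntegral_ofReal_le hB fun x hx =>
            inv_mul_rpow_le (Real.one_le_exp (by positivity)) hv hs (hp x) (le_of_abs_le (hK x hx))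
      _ = ENNReal.ofReal (Real.exp (-1)) := by
          rw [hvB, ← ENNReal.ofReal_mul (by positivity), hM, ← Real.exp_add]
          congr 1; field_simp; ring_nf
      _ ≤ 1 := ENNReal.ofReal_le_one.2 (Real.exp_le_one_iff.2 (by norm_num))


theorem neg_log_volume_ball_le {x : EuclideanSpace ℝ (Fin n)} {r : ℝ} (hr : 0 < r) :
    -Real.log (volume (ball x r)).toReal ≤
      |Real.log (unitBallVolume n)| +
        n * (Real.log 2 + Real.log (Real.exp 1 + 1 / (2 * r))) := by
  have hc := unitBallVolume_pos n
  have hr' : -Real.log r ≤ Real.log 2 + Real.log (Real.exp 1 + 1 / (2 * r)) := by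
    have : Real.log (1 / (2 * r)) ≤ Real.log (Real.exp 1 + 1 / (2 * r)) :=
      Real.log_le_log (by positivity) (by linarith [Real.exp_pos 1])
    rw [one_div, Real.log_inv, Real.log_mul two_ne_zero hr.ne', ← one_div] at this
    linarith
  rw [volume_ball_toReal x hr, Real.log_mul (by positivity) hc.ne', Real.log_pow]
  nlinarith [neg_le_abs (Real.log (unitBallVolume n)),
    mul_le_mul_of_nonneg_left hr' (Nat.cast_nonneg (α := ℝ) n)]

theorem LocallyLogHolder.abs_sub_mul_neg_log_volume_ball_le {C : ℝ} (hp : LocallyLogHolder p C)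
    (hC : 0 ≤ C) {x₀ z x : EuclideanSpace ℝ (Fin n)} {r : ℝ} (hz : z ∈ ball x₀ r)
    (hx : x ∈ ball x₀ r) :
    |p z - p x| * -Real.log (volume (ball x₀ r)).toReal ≤
      C * (|Real.log (unitBallVolume n)| +
        n * (Real.log 2 + 1)) := by
  have hr := pos_of_mem_ball hz
  have hdist : dist z x ≤ 2 * r := by
    linarith [dist_triangle_right z x x₀, mem_ball.1 hz, mem_ball.1 hx]
  have hΔL := hp.abs_sub_mul_log_le hC hdist
  have hL := one_le_log_exp_one_add (by positivity : (0 : ℝ) ≤ 1 / (2 * r))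
  have hΔ : |p z - p x| ≤ C := by nlinarith [abs_nonneg (p z - p x)]
  have hlog2 : 0 ≤ Real.log 2 := Real.log_nonneg one_le_two
  calc |p z - p x| * -Real.log (volume (ball x₀ r)).toReal
      ≤ |p z - p x| * (|Real.log (unitBallVolume n)| +
          n * (Real.log 2 + Real.log (Real.exp 1 + 1 / (2 * r)))) :=
        mul_le_mul_of_nonneg_left (neg_log_volume_ball_le hr) (abs_nonneg _)
    _ = |p z - p x| * |Real.log (unitBallVolume n)| +
          n * (|p z - p x| * Real.log 2 + |p z - p x| * Real.log (Real.exp 1 + 1 / (2 * r))) := by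
        ring
    _ ≤ C * |Real.log (unitBallVolume n)| +
          n * (C * Real.log 2 + C) := by gcongr
    _ = _ := by ring

theorem LocallyLogHolder.exists_luxNorm_indicator_ball_mem_Icc {C pm : ℝ}
    (hp : LocallyLogHolder p C) (hC : 0 ≤ C) (hpm : 0 < pm) (hpm_le : ∀ x, pm ≤ p x) :
    ∃ M ≥ 1, ∀ (x₀ z : EuclideanSpace ℝ (Fin n)) (r : ℝ), z ∈ ball x₀ r →
      (volume (ball x₀ r)).toReal ≤ 1 →
      luxNorm p ((ball x₀ r).indicator fun _ => 1) ∈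
        Icc (M⁻¹ * (volume (ball x₀ r)).toReal ^ (1 / p z))
          (M * (volume (ball x₀ r)).toReal ^ (1 / p z)) := by
  set K := C * (|Real.log (unitBallVolume n)| +
    n * (Real.log 2 + 1)) / pm
  have hK : 0 ≤ K := by have := Real.log_nonneg one_le_two; positivity
  refine ⟨Real.exp ((K + 1) / pm), Real.one_le_exp (by positivity), fun x₀ z r hz hv => ?_⟩
  have hv₀ := volume_ball_toReal_pos x₀ (pos_of_mem_ball hz)
  have hpz : 0 < p z := hpm.trans_le (hpm_le z)
  refine luxNorm_indicator_mem_Icc_of_abs_le hpm hpm_le measurableSet_ball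
    (ofReal_toReal measure_ball_lt_top.ne).symm hv₀ hpz hK fun x hx => ?_
  rw [abs_mul, abs_div, abs_of_pos hpz, abs_of_nonpos (Real.log_nonpos hv₀.le hv),
    div_mul_eq_mul_div]
  exact div_le_div₀ (by positivity) (hp.abs_sub_mul_neg_log_volume_ball_le hC hz hx) hpm (hpm_le z)

theorem one_lt_setLIntegral_inv_rpow {pm l : ℝ} (hpm : 0 < pm) (hp : ∀ x, pm ≤ p x)
    (hB : MeasurableSet B) (hB₁ : 1 ≤ volume B) (hl : 0 < l) (hl₁ : l < 1) :
    1 < ∫⁻ x in B, ENNReal.ofReal (l⁻¹ ^ p x) := by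
  have h₁ : 1 < l⁻¹ := (one_lt_inv₀ hl).2 hl₁
  calc 1 < ENNReal.ofReal (l⁻¹ ^ pm) * 1 := by
        rw [mul_one, ENNReal.one_lt_ofReal]; exact Real.one_lt_rpow h₁ hpm
    _ ≤ ENNReal.ofReal (l⁻¹ ^ pm) * volume B := by gcongr
    _ ≤ _ := ofReal_mul_le_setLIntegral hB fun x _ =>
        Real.rpow_le_rpow_of_exponent_le h₁.le (hp x)

theorem LogHolderAtInfinity.abs_sub_div_mul_log_le {C q γ v : ℝ} (hp : LogHolderAtInfinity p C q)
    (hC : 0 ≤ C) (hq : 0 < q) (hγ : 0 < γ) (hv : 1 ≤ v) {x : EuclideanSpace ℝ (Fin n)}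
    (hx : v ^ γ ≤ ‖x‖) : |(q - p x) / q * Real.log v| ≤ C / (γ * q) := by
  have hlog : γ * Real.log v ≤ Real.log (Real.exp 1 + v ^ γ) := by
    rw [← Real.log_rpow (by linarith)]
    exact Real.log_le_log (by positivity) (by linarith [Real.exp_pos 1])
  rw [abs_mul, abs_div, abs_sub_comm, abs_of_pos hq, abs_of_nonneg (Real.log_nonneg hv),
    le_div_iff₀ (by positivity)]
  calc |p x - q| / q * Real.log v * (γ * q) = |p x - q| * (γ * Real.log v) := by
        field_simp
    _ ≤ |p x - q| * Real.log (Real.exp 1 + v ^ γ) := by gcongr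
    _ ≤ C := hp.abs_sub_mul_log_le hC (by positivity) hx

theorem LogHolderAtInfinity.setLIntegral_inv_rpow_le {C pm q γ v A : ℝ}
    (hp : LogHolderAtInfinity p C q) (hC : 0 ≤ C) (hpm : 0 < pm) (hpm_le : ∀ x, pm ≤ p x)
    (hq : pm ≤ q) (hγ : 0 < γ) (hγn : γ * n ≤ pm / q) (hB : MeasurableSet B)
    (hvB : volume B = ENNReal.ofReal v) (hv : 1 ≤ v) (hA : 1 ≤ A) :
    ∫⁻ x in B, ENNReal.ofReal ((A * v ^ (1 / q))⁻¹ ^ p x) ≤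
      ENNReal.ofReal (A ^ (-pm) * (unitBallVolume n +
        Real.exp (C / (γ * q)))) := by
  set c := unitBallVolume n
  have hc : 0 < c := unitBallVolume_pos n
  have hq₀ : 0 < q := hpm.trans_le hq
  have hv₀ : 0 < v := by linarith
  have hl : 1 ≤ A * v ^ (1 / q) :=
    one_le_mul_of_one_le_of_one_le hA (Real.one_le_rpow hv (by positivity))
  have hinner : volume (ball (0 : EuclideanSpace ℝ (Fin n)) (v ^ γ)) =
      ENNReal.ofReal (v ^ (γ * n) * c) := by
    rw [volume_ball_eq_ofReal _ (by positivity), ← Real.rpow_natCast, ← Real.rpow_mul hv₀.le]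
  have hnear : ∫⁻ x in B ∩ ball 0 (v ^ γ), ENNReal.ofReal ((A * v ^ (1 / q))⁻¹ ^ p x) ≤
      ENNReal.ofReal (A ^ (-pm) * c) := by
    calc _ ≤ ENNReal.ofReal (A ^ (-pm) * v ^ (-(pm / q))) * volume (B ∩ ball 0 (v ^ γ)) :=
          setLIntegral_ofReal_le (hB.inter measurableSet_ball) fun x _ => by
            calc (A * v ^ (1 / q))⁻¹ ^ p x ≤ (A * v ^ (1 / q))⁻¹ ^ pm :=
                  Real.rpow_le_rpow_of_exponent_ge (by positivity) (inv_le_one_of_one_le₀ hl)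
                    (hpm_le x)
              _ = A ^ (-pm) * v ^ (-(pm / q)) := by
                  rw [Real.inv_rpow (by positivity), ← Real.rpow_neg (by positivity),
                    Real.mul_rpow (by positivity) (by positivity), ← Real.rpow_mul hv₀.le]
                  ring_nf
      _ ≤ ENNReal.ofReal (A ^ (-pm) * v ^ (-(pm / q))) * ENNReal.ofReal (v ^ (γ * n) * c) := by
          rw [← hinner]; gcongr; exact inter_subset_right
      _ = ENNReal.ofReal (A ^ (-pm) * c * v ^ (γ * n - pm / q)) := by
          rw [← ENNReal.ofReal_mul (by positivity), sub_eq_add_neg, Real.rpow_add hv₀]; ring_nf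
      _ ≤ ENNReal.ofReal (A ^ (-pm) * c) := ENNReal.ofReal_le_ofReal <|
          mul_le_of_le_one_right (by positivity)
            (Real.rpow_le_one_of_one_le_of_nonpos hv (sub_nonpos.2 hγn))
  have hfar : ∫⁻ x in B \ ball 0 (v ^ γ), ENNReal.ofReal ((A * v ^ (1 / q))⁻¹ ^ p x) ≤
      ENNReal.ofReal (A ^ (-pm) * Real.exp (C / (γ * q))) := by
    calc _ ≤ ENNReal.ofReal (A ^ (-pm) * Real.exp (C / (γ * q)) / v) *
            volume (B \ ball 0 (v ^ γ)) :=
          setLIntegral_ofReal_le (hB.diff measurableSet_ball) fun x hx =>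
            inv_mul_rpow_le hA hv₀ hq₀ (hpm_le x) (le_of_abs_le
              (hp.abs_sub_div_mul_log_le hC hq₀ hγ hv (by simpa using hx.2)))
      _ ≤ ENNReal.ofReal (A ^ (-pm) * Real.exp (C / (γ * q)) / v) * ENNReal.ofReal v := by
          rw [← hvB]; gcongr; exact sdiff_subset
      _ = ENNReal.ofReal (A ^ (-pm) * Real.exp (C / (γ * q))) := by
          rw [← ENNReal.ofReal_mul (by positivity)]; congr 1; field_simp
  rw [← lintegral_inter_add_sdiff _ B (measurableSet_ball (x := 0) (ε := v ^ γ)), mul_add,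
    ENNReal.ofReal_add (by positivity) (by positivity)]
  exact add_le_add hnear hfar

theorem LogHolderAtInfinity.ofReal_le_setLIntegral_inv_rpow {C pm q γ v a : ℝ}
    (hp : LogHolderAtInfinity p C q) (hC : 0 ≤ C) (hpm_le : ∀ x, pm ≤ p x) (hq : 0 < q)
    (hγ : 0 < γ) (hγn : γ * n ≤ 1 / 2) (hB : MeasurableSet B) (hvB : volume B = ENNReal.ofReal v)
    (hv : 1 ≤ v) (hvc : 4 * unitBallVolume n ^ 2 ≤ v)
    (ha : 0 < a) (ha₁ : a ≤ 1) :
    ENNReal.ofReal (a ^ (-pm) * Real.exp (-(C / (γ * q))) / 2) ≤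
      ∫⁻ x in B, ENNReal.ofReal ((a * v ^ (1 / q))⁻¹ ^ p x) := by
  set c := unitBallVolume n
  have hc : 0 < c := unitBallVolume_pos n
  have hv₀ : 0 < v := by linarith
  have hinner : volume (ball (0 : EuclideanSpace ℝ (Fin n)) (v ^ γ)) ≤ ENNReal.ofReal (v / 2) := by
    rw [volume_ball_eq_ofReal _ (by positivity), ← Real.rpow_natCast, ← Real.rpow_mul hv₀.le]
    have h₁ : v ^ (γ * n) ≤ √v := by
      rw [Real.sqrt_eq_rpow]; exact Real.rpow_le_rpow_of_exponent_le hv hγn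
    have h₂ : 2 * c ≤ √v := Real.le_sqrt_of_sq_le (by linarith)
    have h₃ := Real.mul_self_sqrt hv₀.le
    exact ENNReal.ofReal_le_ofReal (by nlinarith [Real.sqrt_nonneg v])
  have hfar : ENNReal.ofReal (v / 2) ≤ volume (B \ ball (0 : EuclideanSpace ℝ (Fin n)) (v ^ γ)) :=
    calc ENNReal.ofReal (v / 2) = ENNReal.ofReal v - ENNReal.ofReal (v / 2) := by
          rw [← ENNReal.ofReal_sub _ (by positivity)]; ring_nf
      _ ≤ volume B - volume (ball (0 : EuclideanSpace ℝ (Fin n)) (v ^ γ)) := by rw [hvB]; gcongr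
      _ ≤ _ := le_measure_sdiff
  calc ENNReal.ofReal (a ^ (-pm) * Real.exp (-(C / (γ * q))) / 2)
      = ENNReal.ofReal (a ^ (-pm) * Real.exp (-(C / (γ * q))) / v) * ENNReal.ofReal (v / 2) := by
        rw [← ENNReal.ofReal_mul (by positivity)]; congr 1; field_simp
    _ ≤ ENNReal.ofReal (a ^ (-pm) * Real.exp (-(C / (γ * q))) / v) *
          volume (B \ ball 0 (v ^ γ)) := by gcongr
    _ ≤ ∫⁻ x in B \ ball 0 (v ^ γ), ENNReal.ofReal ((a * v ^ (1 / q))⁻¹ ^ p x) :=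
        ofReal_mul_le_setLIntegral (hB.diff measurableSet_ball) fun x hx =>
          le_inv_mul_rpow ha ha₁ hv₀ hq (hpm_le x) (neg_le_of_abs_le
            (hp.abs_sub_div_mul_log_le hC hq hγ hv (by simpa using hx.2)))
    _ ≤ _ := lintegral_mono_set sdiff_subset

theorem exists_rpow_neg_gt_and_mul_lt_one {s : ℝ} (hs : 0 < s) (b V : ℝ) :
    ∃ a : ℝ, 0 < a ∧ a ≤ 1 ∧ b < a ^ (-s) ∧ a * V < 1 := by
  have hpos : ∀ᶠ a in 𝓝[>] (0 : ℝ), 0 < a := self_mem_nhdsWithin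
  have hsmall : ∀ᶠ a in 𝓝[>] (0 : ℝ), a ≤ 1 ∧ a * V < 1 := nhdsWithin_le_nhds <|
    (eventually_le_nhds one_pos).and
      (((continuous_mul_const V).tendsto' 0 0 (zero_mul V)).eventually (gt_mem_nhds one_pos))
  obtain ⟨a, ha₀, ⟨ha₁, haV⟩, hab⟩ := (hpos.and (hsmall.and
    ((tendsto_rpow_neg_nhdsGT_zero (neg_lt_zero.2 hs)).eventually_gt_atTop b))).exists
  exact ⟨a, ha₀, ha₁, hab, haV⟩

theorem LogHolderAtInfinity.exists_luxNorm_indicator_mem_Icc {C pm q : ℝ}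
    (hp : LogHolderAtInfinity p C q) (hC : 0 ≤ C) (hpm : 0 < pm) (hpm_le : ∀ x, pm ≤ p x)
    (hq : pm ≤ q) :
    ∃ M ≥ 1, ∀ B : Set (EuclideanSpace ℝ (Fin n)), MeasurableSet B → volume B ≠ ∞ →
      1 ≤ (volume B).toReal →
      luxNorm p (B.indicator fun _ => 1) ∈
        Icc (M⁻¹ * (volume B).toReal ^ (1 / q)) (M * (volume B).toReal ^ (1 / q)) := by
  set c := unitBallVolume n
  have hq₀ : 0 < q := hpm.trans_le hq
  -- `γ * n ≤ pm / (2 * q)`: the ball `‖x‖ < v ^ γ` then adds at most `c * A ^ (-pm)` to the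
  -- upper modular, and once `v ≥ 4 * c ^ 2` it has at most half the volume of `B`.
  set γ := pm / (2 * (n + 1) * q)
  have hγ : 0 < γ := by positivity
  have hγn : γ * n ≤ pm / (2 * q) := by
    rw [div_mul_eq_mul_div, div_le_div_iff₀ (by positivity) (by positivity)]; nlinarith
  have hγn₁ : γ * n ≤ pm / q := hγn.trans (div_le_div_of_nonneg_left hpm.le hq₀ (by linarith))
  have hγn₂ : γ * n ≤ 1 / 2 :=
    hγn.trans (by rw [div_le_div_iff₀ (by positivity) two_pos]; linarith)
  set K := C / (γ * q)
  obtain ⟨A, hA₁, hA⟩ : ∃ A ≥ 1, c + Real.exp K ≤ A ^ pm :=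
    ((eventually_ge_atTop 1).and ((tendsto_rpow_atTop hpm).eventually_ge_atTop _)).exists
  obtain ⟨a, ha₀, ha₁, ha, hac⟩ :=
    exists_rpow_neg_gt_and_mul_lt_one hpm (2 * Real.exp K) ((4 * c ^ 2) ^ (1 / q))
  refine ⟨max A a⁻¹, le_max_of_le_left hA₁, fun B hB hBfin hv => ?_⟩
  set v := (volume B).toReal
  have hvB : volume B = ENNReal.ofReal v := (ofReal_toReal hBfin).symm
  refine Icc_subset_Icc ?_ ?_ (luxNorm_indicator_mem_Icc (fun x => hpm.trans_le (hpm_le x)) hB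
    (by positivity : 0 < a * v ^ (1 / q)) (by positivity : 0 < A * v ^ (1 / q)) ?_ ?_)
  · gcongr; exact inv_le_of_inv_le₀ ha₀ (le_max_right _ _)
  · gcongr; exact le_max_left _ _
  · by_cases hvc : 4 * c ^ 2 ≤ v
    · refine lt_of_lt_of_le ?_ (hp.ofReal_le_setLIntegral_inv_rpow hC hpm_le hq₀ hγ hγn₂ hB hvB
        hv hvc ha₀ ha₁)
      rw [ENNReal.one_lt_ofReal, one_lt_div two_pos, Real.exp_neg, ← div_eq_mul_inv,
        lt_div_iff₀ (Real.exp_pos K)]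
      exact ha
    · refine one_lt_setLIntegral_inv_rpow hpm hpm_le hB
        (by rw [hvB]; exact ENNReal.one_le_ofReal.2 hv) (by positivity) (lt_of_le_of_lt ?_ hac)
      gcongr
      linarith
  · refine (hp.setLIntegral_inv_rpow_le hC hpm hpm_le hq hγ hγn₁ hB hvB hv hA₁).trans
      (ENNReal.ofReal_le_one.2 ?_)
    rw [Real.rpow_neg (by positivity), inv_mul_le_iff₀ (by positivity), mul_one]
    exact hA

theorem exists_luxNorm_indicator_ball_mem_Icc {Clog Cinf pm q : ℝ}
    (hlog : LocallyLogHolder p Clog) (hinf : LogHolderAtInfinity p Cinf q) (hClog : 0 ≤ Clog)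
    (hCinf : 0 ≤ Cinf) (hpm : 0 < pm) (hpm_le : ∀ x, pm ≤ p x) (hq : pm ≤ q) :
    ∃ M ≥ 1, ∀ (x₀ z : EuclideanSpace ℝ (Fin n)) (r : ℝ), z ∈ ball x₀ r →
      luxNorm p ((ball x₀ r).indicator fun _ => 1) ∈
        Icc (M⁻¹ * (volume (ball x₀ r)).toReal ^
            (if (volume (ball x₀ r)).toReal ≤ 1 then 1 / p z else 1 / q))
          (M * (volume (ball x₀ r)).toReal ^
            (if (volume (ball x₀ r)).toReal ≤ 1 then 1 / p z else 1 / q)) := by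
  obtain ⟨M₁, hM₁, hsmall⟩ := hlog.exists_luxNorm_indicator_ball_mem_Icc hClog hpm hpm_le
  obtain ⟨M₂, hM₂, hlarge⟩ := hinf.exists_luxNorm_indicator_mem_Icc hCinf hpm hpm_le hq
  refine ⟨max M₁ M₂, le_max_of_le_left hM₁, fun x₀ z r hz => ?_⟩
  have hv := (volume_ball_toReal_pos x₀ (pos_of_mem_ball hz)).le
  split_ifs with hv₁
  · refine Icc_subset_Icc ?_ ?_ (hsmall x₀ z r hz hv₁) <;> gcongr
    exacts [le_max_left _ _, le_max_left _ _]
  · refine Icc_subset_Icc ?_ ?_ (hlarge _ measurableSet_ball measure_ball_lt_top.ne (by linarith))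
      <;> gcongr
    exacts [le_max_right _ _, le_max_right _ _]

end Luxemburg

theorem div_mem_Icc_of_mem_Icc {N₁ N₂ u₁ u₂ M : ℝ} (hM : 0 < M) (hu₁ : 0 ≤ u₁) (hu₂ : 0 < u₂)
    (h₁ : N₁ ∈ Icc (M⁻¹ * u₁) (M * u₁)) (h₂ : N₂ ∈ Icc (M⁻¹ * u₂) (M * u₂)) :
    N₁ / N₂ ∈ Icc ((M ^ 2)⁻¹ * (u₁ / u₂)) (M ^ 2 * (u₁ / u₂)) := by
  have hN₂ : 0 < N₂ := (by positivity : 0 < M⁻¹ * u₂).trans_le h₂.1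
  constructor
  · calc (M ^ 2)⁻¹ * (u₁ / u₂) = M⁻¹ * u₁ / (M * u₂) := by field_simp
      _ ≤ N₁ / N₂ := div_le_div₀ (h₁.1.trans' (by positivity)) h₁.1 hN₂ h₂.2
  · calc N₁ / N₂ ≤ M * u₁ / (M⁻¹ * u₂) := div_le_div₀ (by positivity) h₁.2 (by positivity) h₂.1
      _ = M ^ 2 * (u₁ / u₂) := by field_simp

theorem rpow_div_rpow_mem_Icc {v₁ v₂ e q f g : ℝ} (hv₁ : 0 < v₁) (hv₁₂ : v₁ ≤ v₂)
    (he : e ∈ Icc f g) (hq : q ∈ Icc f g) :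
    v₁ ^ (if v₁ ≤ 1 then e else q) / v₂ ^ (if v₂ ≤ 1 then e else q) ∈
      Icc ((v₁ / v₂) ^ g) ((v₁ / v₂) ^ f) := by
  have hv₂ : 0 < v₂ := hv₁.trans_le hv₁₂
  have hratio : v₁ / v₂ ≤ 1 := (div_le_one hv₂).2 hv₁₂
  have same : ∀ s ∈ Icc f g, v₁ ^ s / v₂ ^ s ∈ Icc ((v₁ / v₂) ^ g) ((v₁ / v₂) ^ f) :=
    fun s hs => by
      rw [← Real.div_rpow hv₁.le hv₂.le]
      exact ⟨Real.rpow_le_rpow_of_exponent_ge (by positivity) hratio hs.2,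
        Real.rpow_le_rpow_of_exponent_ge (by positivity) hratio hs.1⟩
  split_ifs with h₁ h₂ h₂
  · exact same e he
  · rw [Real.div_rpow hv₁.le hv₂.le, Real.div_rpow hv₁.le hv₂.le]
    exact ⟨div_le_div₀ (by positivity) (Real.rpow_le_rpow_of_exponent_ge hv₁ h₁ he.2)
        (by positivity) (Real.rpow_le_rpow_of_exponent_le (by linarith) hq.2),
      div_le_div₀ (by positivity) (Real.rpow_le_rpow_of_exponent_ge hv₁ h₁ he.1)
        (by positivity) (Real.rpow_le_rpow_of_exponent_le (by linarith) hq.1)⟩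
  · exact absurd (hv₁₂.trans h₂) h₁
  · exact same q hq

theorem stmt10_general {n : ℕ} (p : EuclideanSpace ℝ (Fin n) → ℝ)
    (hpos : ∀ x, 0 < p x)
    (hlow : 0 < essInf p (volume : Measure (EuclideanSpace ℝ (Fin n))))
    (hbd : ∃ M : ℝ, ∀ᵐ x ∂(volume : Measure (EuclideanSpace ℝ (Fin n))), p x ≤ M)
    (Clog Cinf pinf : ℝ) (hClog : 0 < Clog) (hCinf : 0 < Cinf)
    (hlogHolder : ∀ x y, x ≠ y →
      |p x - p y| ≤ Clog / Real.log (Real.exp 1 + 1 / dist x y))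
    (hdecay : ∀ x, |p x - pinf| ≤ Cinf / Real.log (Real.exp 1 + ‖x‖)) :
    ∃ C ≥ (1 : ℝ), ∀ (x₁ x₂ : EuclideanSpace ℝ (Fin n)) (r₁ r₂ : ℝ), 0 < r₁ → 0 < r₂ →
      Metric.ball x₁ r₁ ⊆ Metric.ball x₂ r₂ →
      C⁻¹ * ((volume (Metric.ball x₁ r₁)).toReal / (volume (Metric.ball x₂ r₂)).toReal) ^
          (1 / essInf p (volume : Measure (EuclideanSpace ℝ (Fin n)))) ≤
        luxNorm p ((Metric.ball x₁ r₁).indicator fun _ => (1 : ℝ)) /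
          luxNorm p ((Metric.ball x₂ r₂).indicator fun _ => (1 : ℝ)) ∧
      luxNorm p ((Metric.ball x₁ r₁).indicator fun _ => (1 : ℝ)) /
          luxNorm p ((Metric.ball x₂ r₂).indicator fun _ => (1 : ℝ)) ≤
        C * ((volume (Metric.ball x₁ r₁)).toReal / (volume (Metric.ball x₂ r₂)).toReal) ^
          (1 / essSup p (volume : Measure (EuclideanSpace ℝ (Fin n)))) := by
  have hlog : LocallyLogHolder p Clog := hlogHolder
  have hcont := hlog.continuous hClog.le
  set pm := essInf p volume
  set pM := essSup p volume
  obtain ⟨M, hM⟩ := hbd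
  have hp_mem : ∀ x, p x ∈ Icc pm pM := fun x =>
    ⟨continuous_const.le_of_ae_le hcont
        (ae_essInf_le (isBoundedUnder_of_eventually_ge (ae_of_all _ fun x => (hpos x).le))) x,
      hcont.le_of_ae_le continuous_const (ae_le_essSup (isBoundedUnder_of_eventually_le hM)) x⟩
  have hpmM : pm ≤ pM := (hp_mem 0).1.trans (hp_mem 0).2
  have hq := (projIcc pm pM hpmM pinf).2
  obtain ⟨K, hK, hball⟩ := exists_luxNorm_indicator_ball_mem_Icc hlog
    (LogHolderAtInfinity.projIcc hdecay hpmM hp_mem) hClog.le hCinf.le hlow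
    (fun x => (hp_mem x).1) hq.1
  refine ⟨K ^ 2, one_le_pow₀ hK, fun x₁ x₂ r₁ r₂ hr₁ hr₂ hsub => ?_⟩
  have hx₁ : x₁ ∈ ball x₁ r₁ := mem_ball_self hr₁
  have hratio := div_mem_Icc_of_mem_Icc (by positivity) (by positivity)
    (Real.rpow_pos_of_pos (volume_ball_toReal_pos x₂ hr₂) _) (hball x₁ x₁ r₁ hx₁)
    (hball x₂ x₁ r₂ (hsub hx₁))
  have hexp := rpow_div_rpow_mem_Icc (volume_ball_toReal_pos x₁ hr₁)
    (ENNReal.toReal_mono measure_ball_lt_top.ne (measure_mono hsub))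
    ⟨one_div_le_one_div_of_le (hpos x₁) (hp_mem x₁).2, one_div_le_one_div_of_le hlow (hp_mem x₁).1⟩
    ⟨one_div_le_one_div_of_le (hlow.trans_le hq.1) hq.2, one_div_le_one_div_of_le hlow hq.1⟩
  exact ⟨(mul_le_mul_of_nonneg_left hexp.1 (by positivity)).trans hratio.1,
    hratio.2.trans (mul_le_mul_of_nonneg_left hexp.2 (by positivity))⟩

/-- For globally log-Hölder continuous `p(·)`, the norms of characteristic functions of
nested balls compare as `C⁻¹ (|B₁|/|B₂|)^{1/p₋} ≤ ‖χ_{B₁}‖/‖χ_{B₂}‖ ≤ C (|B₁|/|B₂|)^{1/p₊}`. -/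
theorem stmt10 {n : ℕ} (p : EuclideanSpace ℝ (Fin n) → ℝ) (hp : Measurable p)
    (hpos : ∀ x, 0 < p x)
    (hlow : 0 < essInf p (volume : Measure (EuclideanSpace ℝ (Fin n))))
    (hbd : ∃ M : ℝ, ∀ᵐ x ∂(volume : Measure (EuclideanSpace ℝ (Fin n))), p x ≤ M)
    (Clog Cinf pinf : ℝ) (hClog : 0 < Clog) (hCinf : 0 < Cinf)
    (hlogHolder : ∀ x y, x ≠ y →
      |p x - p y| ≤ Clog / Real.log (Real.exp 1 + 1 / dist x y))
    (hdecay : ∀ x, |p x - pinf| ≤ Cinf / Real.log (Real.exp 1 + ‖x‖)) :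
    ∃ C ≥ (1 : ℝ), ∀ (x₁ x₂ : EuclideanSpace ℝ (Fin n)) (r₁ r₂ : ℝ), 0 < r₁ → 0 < r₂ →
      Metric.ball x₁ r₁ ⊆ Metric.ball x₂ r₂ →
      C⁻¹ * ((volume (Metric.ball x₁ r₁)).toReal / (volume (Metric.ball x₂ r₂)).toReal) ^
          (1 / essInf p (volume : Measure (EuclideanSpace ℝ (Fin n)))) ≤
        luxNorm p ((Metric.ball x₁ r₁).indicator fun _ => (1 : ℝ)) /
          luxNorm p ((Metric.ball x₂ r₂).indicator fun _ => (1 : ℝ)) ∧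
      luxNorm p ((Metric.ball x₁ r₁).indicator fun _ => (1 : ℝ)) /
          luxNorm p ((Metric.ball x₂ r₂).indicator fun _ => (1 : ℝ)) ≤
        C * ((volume (Metric.ball x₁ r₁)).toReal / (volume (Metric.ball x₂ r₂)).toReal) ^
          (1 / essSup p (volume : Measure (EuclideanSpace ℝ (Fin n)))) :=
  stmt10_general p hpos hlow hbd Clog Cinf pinf hClog hCinf hlogHolder hdecay
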